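/- The functor between one-object categories SingleObj ℕ ⥤ SingleObj ℤ induced by the inclusion of monoids ℕ → ℤ exhibits SingleObj ℤ as the localization of SingleObj ℕ at the morphism corresponding to 1 ∈ ℕ: for every category E, precomposition gives a fully faithful functor Fun(SingleObj ℤ, E) ⥤ Fun(SingleObj ℕ, E) whose essential image consists of those functors sending the endomorphism corresponding to 1 to an isomorphism. -/

import Mathlib

/-!
A transformation between functors out of `Bℤ` that is natural along the image of `ℕ` is natural
along the whole group, because the elements along which a fixed morphism is natural form a
subgroup, and `ℕ` generates `ℤ` as a group. Conversely, a functor `G` out of `Bℕ` is determined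
by the endomorphism `G genOne`; when this is an automorphism `e`, sending `n ∈ ℤ` to `e ^ n`
extends `G` along `Bℕ → Bℤ`.
-/

open CategoryTheory

/-- The inclusion of monoids `ℕ → ℤ` (written multiplicatively). -/
def natToIntMul : Multiplicative ℕ →* Multiplicative ℤ :=
  AddMonoidHom.toMultiplicative (Nat.castAddMonoidHom ℤ)

/-- The functor `Bℕ ⥤ Bℤ` induced by the inclusion `ℕ → ℤ`. -/
def BNtoBZ : SingleObj (Multiplicative ℕ) ⥤ SingleObj (Multiplicative ℤ) :=
  SingleObj.mapHom _ _ natToIntMul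

/-- The endomorphism of the unique object of `Bℕ` corresponding to `1 ∈ ℕ`. -/
def genOne : SingleObj.star (Multiplicative ℕ) ⟶ SingleObj.star (Multiplicative ℕ) :=
  Multiplicative.ofAdd 1

namespace CategoryTheory.SingleObj

variable {M N G E : Type*} [Monoid M] [Monoid N] [Group G] [Category E]

def naturalitySubgroup (F₁ F₂ : SingleObj G ⥤ E) (u : F₁.obj (star G) ⟶ F₂.obj (star G)) :
    Subgroup G where
  carrier := {g | F₁.map (toEnd G g) ≫ u = u ≫ F₂.map (toEnd G g)}
  one_mem' := by simp
  mul_mem' := by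
    intro g h (hg : F₁.map _ ≫ u = _) (hh : F₁.map _ ≫ u = _)
    show F₁.map _ ≫ u = _
    rw [map_mul, End.mul_def, Functor.map_comp, Functor.map_comp, Category.assoc, hg,
      reassoc_of% hh]
  inv_mem' := by
    intro g (hg : F₁.map _ ≫ u = _)
    show F₁.map _ ≫ u = _
    rw [map_inv, ← inv_as_inv, Functor.map_inv, Functor.map_inv, IsIso.inv_comp_eq,
      reassoc_of% hg, IsIso.hom_inv_id, Category.comp_id]

instance faithful_whiskeringLeft_mapHom (f : M →* N) :
    ((Functor.whiskeringLeft _ _ E).obj (mapHom M N f)).Faithful where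
  map_injective h := NatTrans.ext (funext fun _ => NatTrans.congr_app h (star M))

lemma full_whiskeringLeft_mapHom (f : M →* G) (hf : Subgroup.closure (Set.range f) = ⊤) :
    ((Functor.whiskeringLeft _ _ E).obj (mapHom M G f)).Full where
  map_surjective {F₁ F₂} η := by
    have hη : naturalitySubgroup F₁ F₂ (η.app (star M)) = ⊤ := by
      rw [eq_top_iff, ← hf, Subgroup.closure_le, Set.range_subset_iff]
      exact fun a => η.naturality a
    exact ⟨natTrans (η.app (star M)) ((Subgroup.eq_top_iff' _).1 hη), rfl⟩

noncomputable def zpowersFunctor {X : E} (e : Aut X) : SingleObj (Multiplicative ℤ) ⥤ E :=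
  functor ((Aut.toEnd X).comp (zpowersHom (Aut X) e))

end CategoryTheory.SingleObj

open CategoryTheory SingleObj Multiplicative

lemma closure_range_natToIntMul : Subgroup.closure (Set.range natToIntMul) = ⊤ := by
  have h : ofAdd (1 : ℤ) ∈ Subgroup.closure (Set.range natToIntMul) :=
    Subgroup.subset_closure ⟨ofAdd 1, rfl⟩
  refine eq_top_iff.2 fun z _ => ?_
  simpa [← ofAdd_zsmul] using Subgroup.zpow_mem _ h z.toAdd

noncomputable def BNtoBZCompZpowersFunctorIso {E : Type*} [Category E]
    (G : SingleObj (Multiplicative ℕ) ⥤ E) (e : Aut (G.obj (star _))) (he : e.hom = G.map genOne) :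
    BNtoBZ ⋙ zpowersFunctor e ≅ G :=
  NatIso.ofComponents (fun _ => Iso.refl _) fun a => by
    have hmaps : ((Aut.toEnd _).comp (zpowersHom _ e)).comp natToIntMul =
        (G.mapEnd (star _)).comp (SingleObj.toEnd _).toMonoidHom :=
      MonoidHom.ext_mnat <| by
        change Aut.toEnd _ (e ^ (1 : ℤ)) = G.map genOne
        rw [zpow_one]
        exact he
    exact (Category.comp_id _).trans
      ((DFunLike.congr_fun hmaps a).trans (Category.id_comp _).symm)

/-- `Bℕ → Bℤ` is a localization at the generator: for every category `E`,
precomposition is fully faithful, with essential image the functors inverting the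
endomorphism corresponding to `1 ∈ ℕ`. -/
theorem BNtoBZ_localization (E : Type*) [Category E] :
    ((Functor.whiskeringLeft (SingleObj (Multiplicative ℕ)) (SingleObj (Multiplicative ℤ)) E).obj
        BNtoBZ).Full ∧
    ((Functor.whiskeringLeft (SingleObj (Multiplicative ℕ)) (SingleObj (Multiplicative ℤ)) E).obj
        BNtoBZ).Faithful ∧
    ∀ G : SingleObj (Multiplicative ℕ) ⥤ E,
      ((Functor.whiskeringLeft (SingleObj (Multiplicative ℕ)) (SingleObj (Multiplicative ℤ)) E).obj
        BNtoBZ).essImage G ↔ IsIso (G.map genOne) := by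
  refine ⟨full_whiskeringLeft_mapHom natToIntMul closure_range_natToIntMul,
    faithful_whiskeringLeft_mapHom natToIntMul,
    fun G => ⟨?_, fun _ => ⟨_, ⟨BNtoBZCompZpowersFunctorIso G (asIso _) rfl⟩⟩⟩⟩
  rintro ⟨F, ⟨e⟩⟩
  rw [← NatIso.isIso_map_iff e genOne]
  exact inferInstanceAs (IsIso (F.map (BNtoBZ.map genOne)))
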